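/- Let Ω ⊆ ℝ^D be bounded and measurable with Lebesgue measure |Ω| > 0, and let (x_n)_{n∈ℕ} be an equidistributed sequence in Ω. Then for every d ∈ ℕ there exists N₀ ∈ ℕ such that for all N ≥ N₀ the point set X_N = {x_1,…,x_N} is ℙ_d(Ω)-unisolvent; that is, the only polynomial function p of degree at most d on ℝ^D satisfying p(x_n) = 0 for all n = 1,…,N is the zero polynomial. -/

import Mathlib

open MeasureTheory Filter

/-- A sequence `(xₙ)` is equidistributed in `Ω` if `(|Ω|/N) Σ_{n<N} g(xₙ) → ∫_Ω g` for
every bounded measurable `g : Ω → ℝ` that is continuous Lebesgue-almost everywhere. -/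
def Equidistributed {D : ℕ} (Ω : Set (EuclideanSpace ℝ (Fin D)))
    (x : ℕ → EuclideanSpace ℝ (Fin D)) : Prop :=
  ∀ g : EuclideanSpace ℝ (Fin D) → ℝ, Measurable g → (∃ M, ∀ y ∈ Ω, |g y| ≤ M) →
    (∀ᵐ y ∂(volume.restrict Ω), ContinuousWithinAt g Ω y) →
    Tendsto (fun N : ℕ => ((volume Ω).toReal / N) * ∑ n ∈ Finset.range N, g (x n))
      atTop (nhds (∫ y in Ω, g y))

/-!
A polynomial vanishing at every point of an equidistributed sequence vanishes Lebesgue-almost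
everywhere on `Ω`: test equidistribution against the bounded continuous function `min |p| 1`,
whose averages along the sequence are all zero, so its integral over `Ω` is zero. A nonzero
polynomial vanishes only on a null set (induction on the number of variables, Fubini, and
finiteness of the roots of a univariate polynomial), so `|Ω| > 0` forces `p = 0`. Finally, the
subspaces of polynomials of degree `≤ d` vanishing at `x₀, …, x_{N-1}` decrease with `N` in a
finite-dimensional space, hence stabilize, and their limit is the zero subspace.
-/

theorem IsArtinian.exists_forall_lt_eq_zero_imp_eq_zero {R M P : Type*} [Ring R]
    [AddCommGroup M] [Module R M] [IsArtinian R M] [AddCommGroup P] [Module R P]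
    (f : ℕ → M →ₗ[R] P) (hf : ∀ v, (∀ n, f n v = 0) → v = 0) :
    ∃ N₀, ∀ v, (∀ n < N₀, f n v = 0) → v = 0 := by
  let K : ℕ →o (Submodule R M)ᵒᵈ :=
    ⟨fun N => OrderDual.toDual (⨅ (n) (_ : n < N), LinearMap.ker (f n)),
      fun _ _ hab => OrderDual.toDual_le_toDual.mpr <| biInf_mono fun _ hn => hn.trans_le hab⟩
  have mem_K {N v} : v ∈ OrderDual.ofDual (K N) ↔ ∀ n < N, f n v = 0 := by
    simp [K, Submodule.mem_iInf]
  obtain ⟨N₀, hN₀⟩ := IsArtinian.monotone_stabilizes K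
  refine ⟨N₀, fun v hv => hf v fun n => ?_⟩
  have hv' : v ∈ OrderDual.ofDual (K (max N₀ (n + 1))) := by
    rwa [← hN₀ _ (le_max_left _ _), mem_K]
  exact mem_K.mp hv' n (by omega)

namespace MvPolynomial

theorem finite_setOf_eval_cons_eq_zero {R : Type*} [CommRing R] [IsDomain R] {n : ℕ}
    (p : MvPolynomial (Fin (n + 1)) R) {z : Fin n → R}
    (hz : eval z (finSuccEquiv R n p).leadingCoeff ≠ 0) :
    {a : R | eval (Fin.cons a z) p = 0}.Finite := by
  have hne : (finSuccEquiv R n p).map (eval z) ≠ 0 := fun h => hz <| by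
    simpa using congrArg (Polynomial.coeff · (finSuccEquiv R n p).natDegree) h
  simpa [eval_eq_eval_mv_eval'] using Polynomial.finite_setOfPred_isRoot hne

theorem volume_setOf_eval_eq_zero {n : ℕ} {p : MvPolynomial (Fin n) ℝ} (hp : p ≠ 0) :
    volume {y : Fin n → ℝ | eval y p = 0} = 0 := by
  induction n with
  | zero =>
    obtain ⟨a, rfl⟩ := C_surjective (Fin 0) p
    have ha : a ≠ 0 := by rintro rfl; exact hp C_0
    simp [ha]
  | succ n ih =>
    have hlc : (finSuccEquiv ℝ n p).leadingCoeff ≠ 0 := by simpa using hp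
    have hS : MeasurableSet {y : Fin (n + 1) → ℝ | eval y p = 0} :=
      measurableSet_eq_fun (continuous_eval p).measurable measurable_const
    let e := MeasurableEquiv.piFinSuccAbove (fun _ : Fin (n + 1) => ℝ) 0
    rw [← ((volume_preserving_piFinSuccAbove (fun _ => ℝ) 0).symm).measure_preimage
      hS.nullMeasurableSet, Measure.volume_eq_prod, Measure.prod_apply_symm (e.symm.measurable hS)]
    have hae : ∀ᵐ z : Fin n → ℝ, eval z (finSuccEquiv ℝ n p).leadingCoeff ≠ 0 :=
      ae_iff.mpr (by simpa using ih hlc)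
    refine (lintegral_congr_ae (hae.mono fun z hz => ?_)).trans lintegral_zero
    simpa [e, Fin.consEquiv] using (finite_setOf_eval_cons_eq_zero p hz).measure_zero volume

theorem ae_eval_ofLp_ne_zero {n : ℕ} {p : MvPolynomial (Fin n) ℝ} (hp : p ≠ 0) :
    ∀ᵐ y : EuclideanSpace ℝ (Fin n), eval (fun i => y i) p ≠ 0 := by
  have hS : MeasurableSet {z : Fin n → ℝ | eval z p = 0} :=
    measurableSet_eq_fun (continuous_eval p).measurable measurable_const
  simp only [ae_iff, ne_eq, not_not]
  exact ((EuclideanSpace.volume_preserving_symm_measurableEquiv_toLp (Fin n)).measure_preimage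
    hS.nullMeasurableSet).trans (volume_setOf_eval_eq_zero hp)

theorem continuous_eval_ofLp {n : ℕ} (p : MvPolynomial (Fin n) ℝ) :
    Continuous fun y : EuclideanSpace ℝ (Fin n) => eval (fun i => y i) p :=
  (continuous_eval p).comp (PiLp.continuous_ofLp 2 _)

end MvPolynomial

namespace Equidistributed

variable {D : ℕ} {Ω : Set (EuclideanSpace ℝ (Fin D))} {x : ℕ → EuclideanSpace ℝ (Fin D)}

theorem setIntegral_eq_zero (hx : Equidistributed Ω x) {g : EuclideanSpace ℝ (Fin D) → ℝ}
    (hg : Continuous g) (hgb : ∃ M, ∀ y ∈ Ω, |g y| ≤ M) (hgx : ∀ n, g (x n) = 0) :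
    ∫ y in Ω, g y = 0 := by
  have := hx g hg.measurable hgb (ae_of_all _ fun y => hg.continuousWithinAt)
  simp only [hgx, Finset.sum_const_zero, mul_zero] at this
  exact tendsto_nhds_unique this tendsto_const_nhds

theorem ae_restrict_eq_zero (hx : Equidistributed Ω x) (hΩ : volume Ω ≠ ⊤)
    {f : EuclideanSpace ℝ (Fin D) → ℝ} (hf : Continuous f) (hfx : ∀ n, f (x n) = 0) :
    ∀ᵐ y ∂volume.restrict Ω, f y = 0 := by
  have : IsFiniteMeasure (volume.restrict Ω) := isFiniteMeasure_restrict.mpr hΩ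
  let g y := min |f y| 1
  have hg : Continuous g := hf.abs.min continuous_const
  have hg_le (y) : |g y| ≤ 1 := by
    rw [abs_of_nonneg (by positivity)]
    exact min_le_right _ _
  have hg0 : g =ᵐ[volume.restrict Ω] 0 :=
    (integral_eq_zero_iff_of_nonneg (fun y => by positivity)
      (Integrable.of_bound hg.aestronglyMeasurable 1 (ae_of_all _ hg_le))).mp
      (hx.setIntegral_eq_zero hg ⟨1, fun y _ => hg_le y⟩ fun n => by simp [g, hfx n])
  filter_upwards [hg0] with y hy
  exact abs_eq_zero.mp ((min_eq_iff.mp hy).resolve_right (by norm_num)).1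

theorem eq_zero_of_forall_eval_eq_zero (hx : Equidistributed Ω x) (hΩ : 0 < (volume Ω).toReal)
    {p : MvPolynomial (Fin D) ℝ} (hp : ∀ n, MvPolynomial.eval (fun i => x n i) p = 0) : p = 0 := by
  by_contra hp0
  obtain ⟨hΩ_pos, hΩ_fin⟩ := ENNReal.toReal_pos_iff.mp hΩ
  have hfalse : ∀ᵐ y ∂volume.restrict Ω, False := by
    filter_upwards [hx.ae_restrict_eq_zero hΩ_fin.ne (MvPolynomial.continuous_eval_ofLp p) hp,
      ae_restrict_of_ae (MvPolynomial.ae_eval_ofLp_ne_zero hp0)] with y hy hy'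
    exact hy' hy
  rw [Filter.eventually_false_iff_eq_bot, ae_eq_bot, Measure.restrict_eq_zero] at hfalse
  exact hΩ_pos.ne' hfalse

end Equidistributed

theorem equidistributed_eventually_unisolvent_general
    (D : ℕ) (Ω : Set (EuclideanSpace ℝ (Fin D)))
    (hvol : 0 < (volume Ω).toReal)
    (x : ℕ → EuclideanSpace ℝ (Fin D))
    (hequi : Equidistributed Ω x) :
    ∀ d : ℕ, ∃ N₀ : ℕ, ∀ N ≥ N₀,
      ∀ p : MvPolynomial (Fin D) ℝ, p.totalDegree ≤ d →
        (∀ n < N, MvPolynomial.eval (fun i => x n i) p = 0) → p = 0 := by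
  intro d
  let V := MvPolynomial.restrictTotalDegree (Fin D) ℝ d
  let ev (n : ℕ) : V →ₗ[ℝ] ℝ := (MvPolynomial.aeval fun i => x n i).toLinearMap ∘ₗ V.subtype
  obtain ⟨N₀, hN₀⟩ := IsArtinian.exists_forall_lt_eq_zero_imp_eq_zero ev fun v hv =>
    Subtype.ext (hequi.eq_zero_of_forall_eval_eq_zero hvol hv)
  refine ⟨N₀, fun N hN p hp hvan => ?_⟩
  have hpV : p ∈ V := (MvPolynomial.mem_restrictTotalDegree _ _ _).mpr hp
  exact congrArg Subtype.val (hN₀ ⟨p, hpV⟩ fun n hn => hvan n (by omega))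

/-- **Equidistributed sequences are eventually unisolvent.** For every degree `d` there
is `N₀` such that for all `N ≥ N₀` the point set `{x₁,…,x_N}` is `ℙ_d(Ω)`-unisolvent:
the only polynomial of degree at most `d` vanishing at all of `x₁,…,x_N` is the zero
polynomial. -/
theorem equidistributed_eventually_unisolvent
    (D : ℕ) (Ω : Set (EuclideanSpace ℝ (Fin D)))
    (hΩmeas : MeasurableSet Ω) (hΩbd : Bornology.IsBounded Ω)
    (hvol : 0 < (volume Ω).toReal)
    (x : ℕ → EuclideanSpace ℝ (Fin D)) (hxΩ : ∀ n, x n ∈ Ω)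
    (hequi : Equidistributed Ω x) :
    ∀ d : ℕ, ∃ N₀ : ℕ, ∀ N ≥ N₀,
      ∀ p : MvPolynomial (Fin D) ℝ, p.totalDegree ≤ d →
        (∀ n < N, MvPolynomial.eval (fun i => x n i) p = 0) → p = 0 :=
  equidistributed_eventually_unisolvent_general D Ω hvol x hequi
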